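/- Let P be a set of n points in ℝ² and suppose a single line or circle C contains exactly εn points of P, where 0 < ε < 1. Then the number of distinct perpendicular bisectors determined by pairs of distinct points of P is at least min(ε, 1−ε) · ε · n²/4. -/

import Mathlib

open scoped Classical

noncomputable section

def bisector (a b : EuclideanSpace ℝ (Fin 2)) : Set (EuclideanSpace ℝ (Fin 2)) :=
  {x | dist x a = dist x b}

def IsCircleOrLine (C : Set (EuclideanSpace ℝ (Fin 2))) : Prop :=
  (∃ o r, 0 < r ∧ C = Metric.sphere o r) ∨
  (∃ (v : EuclideanSpace ℝ (Fin 2)) (t : ℝ), v ≠ 0 ∧ C = {x | (inner ℝ v x : ℝ) = t})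

/-!
For `b ≠ b'` off `C`, a common bisector `L = B(a, b) = B(a', b')` with `a, a' ∈ C` is a mirror
whose reflection `σ` sends both `b` and `b'` into `C`, and at most two mirrors do so. If `C` is a
circle with centre `o` and radius `r`, then `σ o` lies on the circles of radius `r` about `b` and
`b'`, and `L = B(o, σ o)`. If `C = {⟪v, ·⟫ = t}` is a line, `σ b' ∈ C` says that `a` lies on a
level set of `a ↦ β' ‖b - a‖² - β ‖b' - a‖²`, where `β = ⟪v, b⟫ - t` and `β' = ⟪v, b'⟫ - t`;
along `C` this is a nonconstant polynomial of degree at most two.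

So each of `m` points `b` off `C` sees the `k = |P ∩ C|` bisectors `B(a, b)`, `a ∈ P ∩ C`, two
such families share at most two lines, and together they contain at least `m k - m (m - 1)`
bisectors; take `m = min(⌈k/2⌉, |P \ C|)`.
-/

open AffineSubspace EuclideanGeometry
open scoped RealInnerProductSpace EuclideanSpace Finset

section Reflection

variable {V : Type*} [NormedAddCommGroup V] [InnerProductSpace ℝ V]

instance (a b : V) : Nonempty (perpBisector a b) :=
  perpBisector_nonempty.to_subtype

instance (a b : V) : (perpBisector a b).direction.HasOrthogonalProjection := by
  rw [direction_perpBisector]; infer_instance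

lemma norm_sub_sq_sub_norm_sub_sq (x a b : V) :
    ‖x - a‖ ^ 2 - ‖x - b‖ ^ 2 = 2 * ⟪x, b - a⟫ + ‖a‖ ^ 2 - ‖b‖ ^ 2 := by
  rw [norm_sub_sq_real, norm_sub_sq_real, inner_sub_right]; ring

lemma norm_sub_smul_sq (x w : V) (s : ℝ) :
    ‖x - s • w‖ ^ 2 = ‖x‖ ^ 2 - 2 * s * ⟪x, w⟫ + s ^ 2 * ‖w‖ ^ 2 := by
  rw [norm_sub_sq_real, inner_smul_right, norm_smul, mul_pow, Real.norm_eq_abs, sq_abs]; ring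

lemma mem_perpBisector_iff_norm_sub_sq {x a b : V} :
    x ∈ perpBisector a b ↔ ‖x - a‖ ^ 2 - ‖x - b‖ ^ 2 = 0 := by
  rw [mem_perpBisector_iff_dist_eq, dist_eq_norm, dist_eq_norm, sub_eq_zero,
    sq_eq_sq₀ (norm_nonneg _) (norm_nonneg _)]

-- Also for `a = b`: then `perpBisector a a = ⊤` and the coefficient is `0 / 0 = 0`.
theorem reflection_perpBisector_apply (a b x : V) :
    reflection (perpBisector a b) x =
      x - ((‖x - a‖ ^ 2 - ‖x - b‖ ^ 2) / ‖b - a‖ ^ 2) • (b - a) := by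
  rcases eq_or_ne a b with rfl | hab
  · simp [perpBisector_self, reflection_eq_self_iff]
  set c := (‖x - a‖ ^ 2 - ‖x - b‖ ^ 2) / ‖b - a‖ ^ 2
  have hu : ‖b - a‖ ^ 2 ≠ 0 := by simpa [sub_eq_zero] using hab.symm
  have hproj : (orthogonalProjection (perpBisector a b) x : V) = x - (c / 2) • (b - a) := by
    rw [coe_orthogonalProjection_eq_iff_mem]
    constructor
    · have hc : c * ‖b - a‖ ^ 2 = ‖x - a‖ ^ 2 - ‖x - b‖ ^ 2 := div_mul_cancel₀ _ hu
      rw [norm_sub_sq_sub_norm_sub_sq] at hc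
      rw [mem_perpBisector_iff_norm_sub_sq, norm_sub_sq_sub_norm_sub_sq, inner_sub_left,
        real_inner_smul_left, real_inner_self_eq_norm_sq]
      linarith
    · simp only [direction_perpBisector, vsub_eq_sub, sub_sub_cancel]
      exact Submodule.le_orthogonal_orthogonal _
        (Submodule.smul_mem _ _ (Submodule.mem_span_singleton_self _))
  rw [reflection_apply', hproj, vsub_eq_sub, vadd_eq_add]
  module

theorem reflection_perpBisector_right (a b : V) : reflection (perpBisector a b) b = a := by
  rcases eq_or_ne a b with rfl | hab
  · simp [perpBisector_self, reflection_eq_self_iff]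
  have hu : ‖b - a‖ ^ 2 ≠ 0 := by simpa [sub_eq_zero] using hab.symm
  rw [reflection_perpBisector_apply, sub_self, norm_zero]
  simp [hu]

theorem reflection_perpBisector_left (a b : V) : reflection (perpBisector a b) a = b := by
  rw [eq_reflection_of_eq_subspace (perpBisector_comm a b), reflection_perpBisector_right]

theorem eq_of_perpBisector_eq_perpBisector {a a' b : V}
    (h : perpBisector a b = perpBisector a' b) : a = a' := by
  rw [← reflection_perpBisector_right a b, eq_reflection_of_eq_subspace h,
    reflection_perpBisector_right]

theorem perpBisector_reflection_perpBisector {a b o : V} (ho : o ∉ perpBisector a b) :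
    perpBisector o (reflection (perpBisector a b) o) = perpBisector a b := by
  have hab : a ≠ b := by rintro rfl; simp at ho
  rw [mem_perpBisector_iff_norm_sub_sq] at ho
  have hu : ‖b - a‖ ^ 2 ≠ 0 := by simpa [sub_eq_zero] using hab.symm
  ext x
  rw [mem_perpBisector_iff_norm_sub_sq, mem_perpBisector_iff_norm_sub_sq,
    reflection_perpBisector_apply]
  have hc := div_mul_cancel₀ (‖o - a‖ ^ 2 - ‖o - b‖ ^ 2) hu
  have hc0 := div_ne_zero ho hu
  generalize (‖o - a‖ ^ 2 - ‖o - b‖ ^ 2) / ‖b - a‖ ^ 2 = c at hc hc0 ⊢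
  have key : ‖x - o‖ ^ 2 - ‖x - (o - c • (b - a))‖ ^ 2 =
      -c * (‖x - a‖ ^ 2 - ‖x - b‖ ^ 2) := by
    rw [norm_sub_sq_sub_norm_sub_sq] at hc ⊢
    rw [norm_sub_sq_sub_norm_sub_sq, sub_sub_cancel_left, norm_sub_sq_real, inner_neg_right,
      inner_smul_right, inner_smul_right, norm_smul, mul_pow, Real.norm_eq_abs, sq_abs]
    linear_combination (-c) * hc
  rw [key]
  simp [hc0]

theorem inner_reflection_perpBisector_mul (v a b x : V) :
    ⟪v, reflection (perpBisector a b) x⟫ * ‖b - a‖ ^ 2 =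
      ⟪v, x⟫ * ‖b - a‖ ^ 2 - (‖x - a‖ ^ 2 - ‖x - b‖ ^ 2) * ⟪v, b - a⟫ := by
  rcases eq_or_ne a b with rfl | hab
  · simp
  have hu : ‖b - a‖ ^ 2 ≠ 0 := by simpa [sub_eq_zero] using hab.symm
  rw [reflection_perpBisector_apply, inner_sub_right, inner_smul_right, sub_mul, mul_right_comm,
    div_mul_cancel₀ _ hu]

end Reflection

theorem Set.encard_le_two_of_eq_or_eq {α : Type*} {s : Set α}
    (h : ∀ x ∈ s, ∀ y ∈ s, ∀ z ∈ s, x ≠ y → z = x ∨ z = y) : s.encard ≤ 2 := by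
  by_contra! hs
  obtain ⟨t, hts, ht⟩ := Set.exists_subset_encard_eq (Order.add_one_le_of_lt hs)
  obtain ⟨x, y, z, hxy, hxz, hyz, rfl⟩ := Set.encard_eq_three.1 ht
  rcases h x (hts (by simp)) y (hts (by simp)) z (hts (by simp)) hxy with rfl | rfl
  exacts [hxz rfl, hyz rfl]

section Plane

variable {V : Type*} [NormedAddCommGroup V] [InnerProductSpace ℝ V]
  [Fact (Module.finrank ℝ V = 2)]

theorem encard_sphere_inter_sphere_le_two {c₁ c₂ : V} (hc : c₁ ≠ c₂) (r₁ r₂ : ℝ) :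
    (Metric.sphere c₁ r₁ ∩ Metric.sphere c₂ r₂).encard ≤ 2 := by
  have : FiniteDimensional ℝ V := .of_fact_finrank_eq_succ 1
  refine Set.encard_le_two_of_eq_or_eq fun p₁ h₁ p₂ h₂ p h hp => ?_
  exact eq_of_dist_eq_of_dist_eq_of_finrank_eq_two Fact.out hc hp
    h₁.1 h₂.1 h.1 h₁.2 h₂.2 h.2

theorem encard_reflection_perpBisector_mem_sphere_le_two {o b b' : V} {r : ℝ}
    (hb : b ∉ Metric.sphere o r) (hbb' : b ≠ b') :
    {a ∈ Metric.sphere o r |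
      reflection (perpBisector a b) b' ∈ Metric.sphere o r}.encard ≤ 2 := by
  set S := {a ∈ Metric.sphere o r | reflection (perpBisector a b) b' ∈ Metric.sphere o r}
  set g : V → V := fun a => reflection (perpBisector a b) o
  have hg : ∀ a ∈ S, perpBisector o (g a) = perpBisector a b := fun a ha =>
    perpBisector_reflection_perpBisector fun ho => hb <| by
      rw [Metric.mem_sphere, ← ha.1, ← mem_perpBisector_iff_dist_eq', perpBisector_comm]
      exact ho
  have hinj : Set.InjOn g S := fun a₁ h₁ a₂ h₂ h =>
    eq_of_perpBisector_eq_perpBisector (by rw [← hg a₁ h₁, ← hg a₂ h₂, h])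
  have hmaps : Set.MapsTo g S (Metric.sphere b r ∩ Metric.sphere b' r) := by
    intro a ha
    refine ⟨?_, ?_⟩ <;> simp only [g, Metric.mem_sphere]
    · calc dist (reflection (perpBisector a b) o) b
          _ = dist (reflection (perpBisector a b) o) (reflection (perpBisector a b) a) := by
            rw [reflection_perpBisector_left]
          _ = r := by rw [(reflection _).dist_map, dist_comm]; exact ha.1
    · rw [← dist_reflection, dist_comm]
      exact ha.2
  calc S.encard = (g '' S).encard := hinj.encard_image.symm
    _ ≤ _ := Set.encard_le_encard hmaps.image_subset
    _ ≤ 2 := encard_sphere_inter_sphere_le_two hbb' r r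

theorem eq_of_inner_eq_of_inner_eq {v w x y : V} (hv : v ≠ 0) (hw : w ≠ 0)
    (hvw : ⟪v, w⟫ = 0) (hvxy : ⟪v, x⟫ = ⟪v, y⟫) (hwxy : ⟪w, x⟫ = ⟪w, y⟫) : x = y := by
  obtain ⟨μ, hμ⟩ := Submodule.mem_span_singleton.1 <|
    Submodule.mem_span_singleton_of_inner_eq_zero_of_inner_eq_zero hv hw
      (by rw [inner_sub_right, hvxy, sub_self] : ⟪v, x - y⟫ = 0) hvw
  have h : ⟪w, x - y⟫ = 0 := by rw [inner_sub_right, hwxy, sub_self]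
  rw [← hμ, real_inner_smul_right, real_inner_self_eq_norm_sq] at h
  rw [← sub_eq_zero, ← hμ, (mul_eq_zero.1 h).resolve_right (by simpa using hw), zero_smul]

theorem encard_hyperplane_inter_level_set_le_two {v b b' : V} {t : ℝ}
    (hv : v ≠ 0) (hb : ⟪v, b⟫ ≠ t) (hbb' : b ≠ b') (K : ℝ) :
    {a | ⟪v, a⟫ = t ∧
        (⟪v, b'⟫ - t) * ‖b - a‖ ^ 2 - (⟪v, b⟫ - t) * ‖b' - a‖ ^ 2 = K}.encard ≤ 2 := by
  set β := ⟪v, b⟫ - t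
  set β' := ⟪v, b'⟫ - t
  refine Set.encard_le_two_of_eq_or_eq fun a₁ h₁ a₂ h₂ a₃ h₃ h₁₂ => ?_
  set w := a₂ - a₁
  have hw : w ≠ 0 := sub_ne_zero.2 h₁₂.symm
  have hvw : ⟪v, w⟫ = 0 := by rw [inner_sub_right, h₁.1, h₂.1, sub_self]
  obtain ⟨s, hs⟩ := Submodule.mem_span_singleton.1 <|
    Submodule.mem_span_singleton_of_inner_eq_zero_of_inner_eq_zero hv hw
      (by rw [inner_sub_right, h₁.1, h₃.1, sub_self] : ⟪v, a₃ - a₁⟫ = 0) hvw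
  have hq : ∀ r : ℝ, β' * ‖b - (a₁ + r • w)‖ ^ 2 - β * ‖b' - (a₁ + r • w)‖ ^ 2 =
      β' * ‖b - a₁‖ ^ 2 - β * ‖b' - a₁‖ ^ 2
        - 2 * r * (β' * ⟪b - a₁, w⟫ - β * ⟪b' - a₁, w⟫)
        + r ^ 2 * ((β' - β) * ‖w‖ ^ 2) := by
    intro r
    rw [← sub_sub, ← sub_sub, norm_sub_smul_sq, norm_sub_smul_sq]; ring
  have e₂ := h₂.2
  have e₃ := h₃.2
  rw [← h₁.2] at e₂ e₃
  rw [show a₂ = a₁ + (1 : ℝ) • w by simp [w], hq] at e₂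
  rw [show a₃ = a₁ + s • w by rw [hs]; abel, hq] at e₃
  by_cases hs0 : s = 0
  · left; simpa [hs0, sub_eq_zero, eq_comm] using hs
  by_cases hs1 : s = 1
  · right; simpa [hs1, w, eq_comm] using hs
  exfalso
  have hA : s * (s - 1) * ((β' - β) * ‖w‖ ^ 2) = 0 := by linear_combination e₃ - s * e₂
  have hββ' : β' = β := by simpa [hs0, hs1, hw, sub_eq_zero] using hA
  have hB : β * (⟪w, b⟫ - ⟪w, b'⟫) = 0 := by
    rw [hββ'] at e₂
    simp only [real_inner_comm w, inner_sub_right] at e₂ ⊢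
    linear_combination -e₂ / 2
  refine hbb' (eq_of_inner_eq_of_inner_eq hv hw hvw ?_ ?_)
  · linear_combination hββ'.symm
  · exact sub_eq_zero.1 ((mul_eq_zero.1 hB).resolve_left (sub_ne_zero.2 hb))

theorem encard_reflection_perpBisector_mem_hyperplane_le_two {v b b' : V} {t : ℝ}
    (hv : v ≠ 0) (hb : ⟪v, b⟫ ≠ t) (hbb' : b ≠ b') :
    {a | ⟪v, a⟫ = t ∧ ⟪v, reflection (perpBisector a b) b'⟫ = t}.encard ≤ 2 := by
  refine le_trans (Set.encard_le_encard ?_)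
    (encard_hyperplane_inter_level_set_le_two hv hb hbb' (-(⟪v, b⟫ - t) * ‖b' - b‖ ^ 2))
  rintro a ⟨ha, ha'⟩
  refine ⟨ha, ?_⟩
  have h := inner_reflection_perpBisector_mul v a b b'
  rw [ha', inner_sub_right, ha] at h
  linear_combination -h

end Plane

theorem Finset.sum_card_le_card_biUnion_add_mul_choose {ι α : Type*} [DecidableEq ι]
    [DecidableEq α] {s : Finset ι} {F : ι → Finset α} {c : ℕ}
    (h : ∀ i ∈ s, ∀ j ∈ s, i ≠ j → #(F i ∩ F j) ≤ c) :
    ∑ i ∈ s, #(F i) ≤ #(s.biUnion F) + c * (#s).choose 2 := by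
  induction s using Finset.induction_on with
  | empty => simp
  | @insert i s hi ih =>
    have ih := ih fun x hx y hy => h x (mem_insert_of_mem hx) y (mem_insert_of_mem hy)
    have hinter : #(F i ∩ s.biUnion F) ≤ c * #s := by
      rw [inter_biUnion]
      refine card_biUnion_le.trans ?_
      rw [mul_comm, ← smul_eq_mul, ← sum_const]
      exact sum_le_sum fun x hx =>
        h i (mem_insert_self i s) x (mem_insert_of_mem hx) (ne_of_mem_of_not_mem hx hi).symm
    rw [sum_insert hi, biUnion_insert, card_insert_of_notMem hi, Nat.choose_succ_succ',
      Nat.choose_one_right]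
    have := card_union_add_card_inter (F i) (s.biUnion F)
    nlinarith

lemma min_mul_add_four_mul_le {k j : ℕ} :
    min k j * k + 4 * (min ((k + 1) / 2) j * (min ((k + 1) / 2) j - 1)) ≤
      4 * (min ((k + 1) / 2) j * k) := by
  rcases le_total ((k + 1) / 2) j with h | h
  · rw [min_eq_left h]
    have : min k j * k ≤ k * k := Nat.mul_le_mul_right _ (min_le_left _ _)
    rcases Nat.even_or_odd' k with ⟨c, rfl | rfl⟩
    · rcases Nat.eq_zero_or_pos c with rfl | hc
      · simp
      · obtain ⟨d, rfl⟩ : ∃ d, c = d + 1 := ⟨c - 1, by omega⟩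
        rw [show (2 * (d + 1) + 1) / 2 = d + 1 by omega, Nat.add_sub_cancel]
        nlinarith
    · rw [show (2 * c + 1 + 1) / 2 = c + 1 by omega, Nat.add_sub_cancel]
      nlinarith
  · rw [min_eq_right h]
    have : min k j * k ≤ j * k := Nat.mul_le_mul_right _ (min_le_right _ _)
    rcases Nat.eq_zero_or_pos j with rfl | hj
    · simp
    · obtain ⟨i, rfl⟩ : ∃ i, j = i + 1 := ⟨j - 1, by omega⟩
      rw [Nat.add_sub_cancel]
      have : 2 * i + 1 ≤ k := by omega
      nlinarith

local notation "ℝ²" => EuclideanSpace ℝ (Fin 2)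

theorem bisector_eq_perpBisector (a b : ℝ²) : bisector a b = perpBisector a b := by
  ext x; exact mem_perpBisector_iff_dist_eq.symm

theorem bisector_left_injective (b : ℝ²) : Function.Injective (bisector · b) := fun a a' h =>
  eq_of_perpBisector_eq_perpBisector <| SetLike.coe_injective <| by
    simpa only [bisector_eq_perpBisector] using h

theorem IsCircleOrLine.encard_reflection_perpBisector_mem_le_two {C : Set ℝ²}
    (hC : IsCircleOrLine C) {b b' : ℝ²} (hb : b ∉ C) (hbb' : b ≠ b') :
    {a ∈ C | reflection (perpBisector a b) b' ∈ C}.encard ≤ 2 := by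
  rcases hC with ⟨o, r, -, rfl⟩ | ⟨v, t, hv, rfl⟩
  · exact encard_reflection_perpBisector_mem_sphere_le_two hb hbb'
  · exact encard_reflection_perpBisector_mem_hyperplane_le_two hv hb hbb'

theorem IsCircleOrLine.card_image_bisector_inter_le_two {C : Set ℝ²} (hC : IsCircleOrLine C)
    {A : Finset ℝ²} (hA : ∀ a ∈ A, a ∈ C) {b b' : ℝ²} (hb : b ∉ C) (hbb' : b ≠ b') :
    #(A.image (bisector · b) ∩ A.image (bisector · b')) ≤ 2 := by
  set A' := A.filter fun a => reflection (perpBisector a b) b' ∈ C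
  have hsub :
      A.image (bisector · b) ∩ A.image (bisector · b') ⊆ A'.image (bisector · b) := by
    intro L hL
    simp only [Finset.mem_inter, Finset.mem_image] at hL
    obtain ⟨⟨a, ha, rfl⟩, a', ha', h⟩ := hL
    refine Finset.mem_image_of_mem _ (Finset.mem_filter.2 ⟨ha, ?_⟩)
    rw [bisector_eq_perpBisector, bisector_eq_perpBisector, SetLike.coe_set_eq] at h
    rw [← eq_reflection_of_eq_subspace h b', reflection_perpBisector_right]
    exact hA a' ha'
  have hA' : (A' : Set ℝ²).encard ≤ 2 := by
    refine le_trans (Set.encard_le_encard fun a ha => ?_)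
      (hC.encard_reflection_perpBisector_mem_le_two hb hbb')
    rw [Finset.mem_coe, Finset.mem_filter] at ha
    exact ⟨hA a ha.1, ha.2⟩
  rw [Set.encard_coe_eq_coe_finsetCard] at hA'
  exact (Finset.card_le_card hsub).trans (Finset.card_image_le.trans (mod_cast hA'))

theorem IsCircleOrLine.card_mul_card_le_ncard_bisectors_add {C : Set ℝ²}
    (hC : IsCircleOrLine C) (P : Finset ℝ²) {B : Finset ℝ²}
    (hB : B ⊆ P.filter (· ∉ C)) :
    #B * #(P.filter (· ∈ C)) ≤
      {L | ∃ a ∈ P, ∃ b ∈ P, a ≠ b ∧ L = bisector a b}.ncard + 2 * (#B).choose 2 := by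
  set A := P.filter (· ∈ C)
  set T := {L | ∃ a ∈ P, ∃ b ∈ P, a ≠ b ∧ L = bisector a b}
  have hT : T.Finite := ((P ×ˢ P).finite_toSet.image fun p => bisector p.1 p.2).subset
    (by rintro _ ⟨a, ha, b, hb, -, rfl⟩; exact ⟨(a, b), by simp [ha, hb], rfl⟩)
  have hBC : ∀ b ∈ B, b ∈ P ∧ b ∉ C := fun b hb => Finset.mem_filter.1 (hB hb)
  have hsub : ↑(B.biUnion fun b => A.image (bisector · b)) ⊆ T := by
    intro L hL
    obtain ⟨b, hb, hL⟩ := Finset.mem_biUnion.1 (Finset.mem_coe.1 hL)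
    obtain ⟨a, ha, rfl⟩ := Finset.mem_image.1 hL
    obtain ⟨haP, haC⟩ := Finset.mem_filter.1 ha
    exact ⟨a, haP, b, (hBC b hb).1, fun h => (hBC b hb).2 (h ▸ haC), rfl⟩
  calc #B * #A = ∑ b ∈ B, #(A.image (bisector · b)) := by
        simp [Finset.card_image_of_injective _ (bisector_left_injective _)]
    _ ≤ #(B.biUnion fun b => A.image (bisector · b)) + 2 * (#B).choose 2 :=
        Finset.sum_card_le_card_biUnion_add_mul_choose fun b hb b' _ hbb' =>
          hC.card_image_bisector_inter_le_two (fun a ha => (Finset.mem_filter.1 ha).2)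
            (hBC b hb).2 hbb'
    _ ≤ T.ncard + 2 * (#B).choose 2 := by
        gcongr
        rw [← Set.ncard_coe_finset]
        exact Set.ncard_le_ncard hsub hT

theorem IsCircleOrLine.min_mul_le_four_mul_ncard_bisectors {C : Set ℝ²}
    (hC : IsCircleOrLine C) (P : Finset ℝ²) :
    min #(P.filter (· ∈ C)) #(P.filter (· ∉ C)) * #(P.filter (· ∈ C)) ≤
      4 * {L | ∃ a ∈ P, ∃ b ∈ P, a ≠ b ∧ L = bisector a b}.ncard := by
  obtain ⟨B, hB, hBm⟩ := Finset.exists_subset_card_eq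
    (min_le_right ((#(P.filter (· ∈ C)) + 1) / 2) #(P.filter (· ∉ C)))
  have h := hC.card_mul_card_le_ncard_bisectors_add P hB
  have hchoose : 2 * (#B).choose 2 = #B * (#B - 1) := by
    rw [Nat.choose_two_right, Nat.two_mul_div_two_of_even (Nat.even_mul_pred_self _)]
  rw [hchoose, hBm] at h
  linarith [min_mul_add_four_mul_le (k := #(P.filter (· ∈ C))) (j := #(P.filter (· ∉ C)))]

theorem bisectors_of_heavy_circle (P : Finset (EuclideanSpace ℝ (Fin 2))) (n : ℕ)
    (hn : P.card = n) (ε : ℝ)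
    (C : Set (EuclideanSpace ℝ (Fin 2))) (hC : IsCircleOrLine C)
    (hcount : ((P.filter (· ∈ C)).card : ℝ) = ε * n) :
    min ε (1 - ε) * ε * (n : ℝ) ^ 2 / 4 ≤
      (Set.ncard {L : Set (EuclideanSpace ℝ (Fin 2)) |
        ∃ a ∈ P, ∃ b ∈ P, a ≠ b ∧ L = bisector a b} : ℝ) := by
  have hsplit : ((P.filter (· ∉ C)).card : ℝ) = (1 - ε) * n := by
    have : ((P.filter (· ∈ C)).card + (P.filter (· ∉ C)).card : ℝ) = n := by
      exact_mod_cast (Finset.card_filter_add_card_filter_not _).trans hn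
    linear_combination this - hcount
  have key := hC.min_mul_le_four_mul_ncard_bisectors P
  calc min ε (1 - ε) * ε * (n : ℝ) ^ 2 / 4 = min (ε * n) ((1 - ε) * n) * (ε * n) / 4 := by
        rw [← min_mul_of_nonneg _ _ (Nat.cast_nonneg n)]; ring
    _ ≤ _ := by
        rw [← hcount, ← hsplit, div_le_iff₀ (by norm_num : (0 : ℝ) < 4)]
        exact_mod_cast (by linarith [key])
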